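/- Let N ≥ 2 and K be integers with 2 ≤ K ≤ N − 1, and let γ₀ > 0, σ > 0. Set L̂ = (K + 1)/2. Then (1/K) · Σ_{j=0}^{K−1} ((N − j − 1)/N) · log₂(1 + N·K·γ₀ / ((N − j − 1)·σ)) < ((N − L̂)/N) · log₂(1 + N·(2L̂ − 1)·γ₀ / ((N − L̂)·σ)). -/

import Mathlib

/-!
With `a = K γ₀ / σ` and `g t = t · log₂ (1 + a / t)`, the `j`-th summand is `g p_j` for the fraction
`p_j = (N - j - 1) / N` of the frame left for data, and since `2 L̂ - 1 = K` the right-hand side is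
`g ((N - L̂) / N)`, where `(N - L̂) / N` is the mean of the `p_j`. The function `g` is the perspective
of the strictly concave `u ↦ log₂ (1 + u)`, hence strictly concave, and the `p_j` are not all
equal because `K ≥ 2`, so strict Jensen gives the inequality.
-/

open Finset Set Real

section LinearOrderedField

variable {𝕜 : Type*} [Field 𝕜] [LinearOrder 𝕜] [IsStrictOrderedRing 𝕜]

lemma StrictConcaveOn.const_mul {s : Set 𝕜} {f : 𝕜 → 𝕜} (hf : StrictConcaveOn 𝕜 s f) {c : 𝕜}
    (hc : 0 < c) : StrictConcaveOn 𝕜 s fun x => c * f x := by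
  refine ⟨hf.1, fun x hx y hy hxy a b ha hb hab => ?_⟩
  have := mul_lt_mul_of_pos_left (hf.2 hx hy hxy ha hb hab) hc
  simp only [smul_eq_mul] at this ⊢
  linarith

/-- At `t = p x + q y`, the point `a / t` is the convex combination of `a / x` and `a / y` with
weights `p x / t` and `q y / t`. -/
lemma StrictConcaveOn.perspective {φ : 𝕜 → 𝕜} (hφ : StrictConcaveOn 𝕜 (Ioi 0) φ) {a : 𝕜}
    (ha : 0 < a) : StrictConcaveOn 𝕜 (Ioi 0) fun t => t * φ (a / t) := by
  refine ⟨convex_Ioi 0, fun x (hx : 0 < x) y (hy : 0 < y) hxy p q hp hq hpq => ?_⟩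
  simp only [smul_eq_mul]
  set t := p * x + q * y
  have ht : 0 < t := by positivity
  have hcombo : p * x / t * (a / x) + q * y / t * (a / y) = a / t := by
    field_simp
    linear_combination hpq
  have hweights : p * x / t + q * y / t = 1 := by
    rw [← add_div, div_self ht.ne']
  have hne : a / x ≠ a / y := fun h => hxy <| by
    rw [div_eq_div_iff hx.ne' hy.ne', mul_right_inj' ha.ne'] at h
    exact h.symm
  have hjensen := hφ.2 (div_pos ha hx) (div_pos ha hy) hne (by positivity : 0 < p * x / t)
    (by positivity : 0 < q * y / t) hweights
  simp only [smul_eq_mul, hcombo] at hjensen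
  calc p * (x * φ (a / x)) + q * (y * φ (a / y))
      = t * (p * x / t * φ (a / x) + q * y / t * φ (a / y)) := by field_simp
    _ < t * φ (a / t) := mul_lt_mul_of_pos_left hjensen ht

lemma StrictConcaveOn.lt_map_average {ι : Type*} {t : Finset ι} {s : Set 𝕜} {f : 𝕜 → 𝕜}
    (hf : StrictConcaveOn 𝕜 s f) {p : ι → 𝕜} (hmem : ∀ i ∈ t, p i ∈ s)
    (hp : ∃ j ∈ t, ∃ k ∈ t, p j ≠ p k) :
    (#t : 𝕜)⁻¹ * ∑ i ∈ t, f (p i) < f ((#t : 𝕜)⁻¹ * ∑ i ∈ t, p i) := by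
  have hcard : (0 : 𝕜) < #t := by
    obtain ⟨j, hj, -⟩ := hp
    exact_mod_cast card_pos.mpr ⟨j, hj⟩
  simpa only [smul_eq_mul, mul_sum] using hf.lt_map_sum (w := fun _ => (#t : 𝕜)⁻¹)
    (fun _ _ => inv_pos.mpr hcard) (by simp [hcard.ne']) hmem hp

lemma sum_range_sub_natCast (n : ℕ) (c : 𝕜) :
    ∑ j ∈ range n, (c - j) = n * (c - (n - 1) / 2) := by
  induction n with
  | zero => simp
  | succ n ih =>
    rw [sum_range_succ, ih]
    push_cast
    ring

end LinearOrderedField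

lemma Real.strictConcaveOn_logb_Ioi {b : ℝ} (hb : 1 < b) : StrictConcaveOn ℝ (Ioi 0) (logb b) := by
  have hlogb : logb b = fun x => (log b)⁻¹ * log x := funext fun x => by rw [logb, inv_mul_eq_div]
  rw [hlogb]
  exact strictConcaveOn_log_Ioi.const_mul (inv_pos.mpr (log_pos hb))

lemma Real.strictConcaveOn_logb_one_add {b : ℝ} (hb : 1 < b) :
    StrictConcaveOn ℝ (Ioi 0) fun u => logb b (1 + u) :=
  ((strictConcaveOn_logb_Ioi hb).translate_right 1).subset
    (fun u (hu : 0 < u) => show 0 < 1 + u by positivity) (convex_Ioi 0)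

theorem exhaustive_jensen_bound_general (N K : ℕ) (hK : 2 ≤ K) (hKN : K ≤ N - 1)
    (γ₀ σ : ℝ) (hγ : 0 < γ₀) (hσ : 0 < σ) :
    (1 / (K : ℝ)) *
        ∑ j ∈ range K,
          (((N : ℝ) - j - 1) / N) *
            Real.logb 2 (1 + (N : ℝ) * K * γ₀ / (((N : ℝ) - j - 1) * σ)) <
      (((N : ℝ) - ((K : ℝ) + 1) / 2) / N) *
        Real.logb 2
          (1 + (N : ℝ) * (2 * (((K : ℝ) + 1) / 2) - 1) * γ₀ /
            (((N : ℝ) - ((K : ℝ) + 1) / 2) * σ)) := by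
  have hslot : ∀ j ∈ range K, (j : ℝ) + 2 ≤ N := fun j hj => by
    have := mem_range.mp hj
    exact_mod_cast (by omega : j + 2 ≤ N)
  have hN : (0 : ℝ) < N := Nat.cast_pos.mpr (by omega)
  have hmean : (#(range K) : ℝ)⁻¹ * ∑ j ∈ range K, ((N : ℝ) - j - 1) / N
      = ((N : ℝ) - ((K : ℝ) + 1) / 2) / N := by
    simp_rw [sub_right_comm _ _ (1 : ℝ), ← sum_div, sum_range_sub_natCast, card_range]
    field_simp
    ring
  have hJ := ((strictConcaveOn_logb_one_add one_lt_two).perspective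
    (by positivity : 0 < K * γ₀ / σ)).lt_map_average (t := range K)
    (p := fun j => ((N : ℝ) - j - 1) / N)
    (fun j hj => div_pos (by linarith [hslot j hj]) hN)
    ⟨0, mem_range.mpr (by omega), 1, mem_range.mpr (by omega), fun h => by
      rw [div_left_inj' hN.ne'] at h
      push_cast at h
      linarith⟩
  rw [hmean, card_range, ← one_div] at hJ
  refine (Eq.trans_lt ?_ hJ).trans_eq ?_
  · refine congrArg _ (sum_congr rfl fun j hj => ?_)
    have : (N : ℝ) - j - 1 ≠ 0 := by linarith [hslot j hj]
    field_simp
  · congr 3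
    field_simp
    ring

open Finset in
/-- Jensen step in the exhaustive-search analysis: for integers `2 ≤ K ≤ N − 1`
and `γ₀ > 0`, `σ > 0`, with `L̂ = (K+1)/2`,
`(1/K) Σ_{j=0}^{K−1} ((N−j−1)/N) log₂(1 + N K γ₀ / ((N−j−1)σ))
  < ((N−L̂)/N) log₂(1 + N (2L̂−1) γ₀ / ((N−L̂)σ))`. -/
theorem exhaustive_jensen_bound (N K : ℕ) (hN : 2 ≤ N) (hK : 2 ≤ K) (hKN : K ≤ N - 1)
    (γ₀ σ : ℝ) (hγ : 0 < γ₀) (hσ : 0 < σ) :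
    (1 / (K : ℝ)) *
        ∑ j ∈ range K,
          (((N : ℝ) - j - 1) / N) *
            Real.logb 2 (1 + (N : ℝ) * K * γ₀ / (((N : ℝ) - j - 1) * σ)) <
      (((N : ℝ) - ((K : ℝ) + 1) / 2) / N) *
        Real.logb 2
          (1 + (N : ℝ) * (2 * (((K : ℝ) + 1) / 2) - 1) * γ₀ /
            (((N : ℝ) - ((K : ℝ) + 1) / 2) * σ)) :=
  exhaustive_jensen_bound_general N K hK hKN γ₀ σ hγ hσ
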